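/- If a state e of the syntactic skip-free automaton is dead (no path from e reaches successful termination ✓), then e ≡ 0 is provable from the skip-free GKAT axioms including x·0 = 0. -/
import Mathlib


variable {At : Type} {Act : Type} {X : Type} {Y : Type} {Z : Type}

/-- Skip-free GKAT expressions; tests are represented as Boolean predicates on atoms. -/
inductive GExp (At Act : Type) : Type
  | zero : GExp At Act
  | act : Act → GExp At Act
  | add : (At → Bool) → GExp At Act → GExp At Act → GExp At Act
  | seq : GExp At Act → GExp At Act → GExp At Act
  | loop : (At → Bool) → GExp At Act → GExp At Act → GExp At Act

/-- The Brzozowski-style small-step semantics (derivative) of skip-free GKAT expressions.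
`none` is the failure output ⊥, `some (p, none)` is acceptance with action `p`,
and `some (p, some e')` is a transition to `e'` with action `p`. -/
def gderiv : GExp At Act → At → Option (Act × Option (GExp At Act))
  | .zero, _ => none
  | .act p, _ => some (p, none)
  | .add b e f, α => if b α then gderiv e α else gderiv f α
  | .seq e f, α =>
      match gderiv e α with
      | none => none
      | some (p, none) => some (p, some f)
      | some (p, some e') => some (p, some (.seq e' f))
  | .loop b e f, α =>
      if b α then
        match gderiv e α with
        | none => none
        | some (p, none) => some (p, some (.loop b e f))
        | some (p, some e') => some (p, some (.seq e' (.loop b e f)))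
      else gderiv f α

/-- A skip-free automaton structure on `X`. -/
abbrev SFA (At Act X : Type) := X → At → Option (Act × Option X)

/-- Acceptance of a guarded trace (a nonempty list of atom/action pairs) from a state. -/
inductive Accepts (h : SFA At Act X) : X → List (At × Act) → Prop
  | last {x α p} : h x α = some (p, none) → Accepts h x [(α, p)]
  | step {x α p x' w} : h x α = some (p, some x') → Accepts h x' w →
      Accepts h x ((α, p) :: w)

/-- The language of guarded traces accepted by a state of a skip-free automaton. -/
def Lang (h : SFA At Act X) (x : X) : Set (List (At × Act)) := {w | Accepts h x w}

/-- Bisimulations between skip-free automata. -/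
def IsSFBisim (h : SFA At Act X) (k : SFA At Act Y) (R : X → Y → Prop) : Prop :=
  ∀ ⦃x y⦄, R x y → ∀ α : At,
    (h x α = none ↔ k y α = none) ∧
    (∀ p : Act, h x α = some (p, none) ↔ k y α = some (p, none)) ∧
    (∀ (p : Act) (x' : X), h x α = some (p, some x') →
      ∃ y' : Y, k y α = some (p, some y') ∧ R x' y')

/-- Bisimilarity of states of skip-free automata. -/
def SFBisimilar (h : SFA At Act X) (k : SFA At Act Y) (x : X) (y : Y) : Prop :=
  ∃ R, IsSFBisim h k R ∧ R x y

/-- A state of a skip-free automaton is dead if it belongs to some set of states closed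
under transitions and containing no accepting transitions (the largest such set). -/
def Dead (h : SFA At Act X) (x : X) : Prop :=
  ∃ D : Set X, x ∈ D ∧ ∀ y ∈ D, ∀ α : At,
    h y α = none ∨ ∃ (p : Act) (y' : X), h y α = some (p, some y') ∧ y' ∈ D

/-- Provable equality `≡` of skip-free GKAT expressions (full axioms, including `x·0 = 0`). -/
inductive GEq : GExp At Act → GExp At Act → Prop
  | refl (e) : GEq e e
  | symm {e f} : GEq e f → GEq f e
  | trans {e f g} : GEq e f → GEq f g → GEq e g
  | congAdd (b) {e e' f f'} : GEq e e' → GEq f f' → GEq (.add b e f) (.add b e' f')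
  | congSeq {e e' f f'} : GEq e e' → GEq f f' → GEq (.seq e f) (.seq e' f')
  | congLoop (b) {e e' f f'} : GEq e e' → GEq f f' → GEq (.loop b e f) (.loop b e' f')
  | G0 (e f) : GEq (.add (fun _ => true) e f) e
  | G1 (b e) : GEq (.add b e e) e
  | G2 (b e f) : GEq (.add b e f) (.add (fun α => !b α) f e)
  | G3 (b c e f g) :
      GEq (.add b e (.add c f g)) (.add (fun α => b α || c α) (.add b e f) g)
  | G6 (e) : GEq (.seq .zero e) .zero
  | dagger (e) : GEq (.seq e .zero) .zero
  | G7 (e f g) : GEq (.seq e (.seq f g)) (.seq (.seq e f) g)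
  | G8 (b e f g) : GEq (.seq (.add b e f) g) (.add b (.seq e g) (.seq f g))
  | FP (b e f) : GEq (.loop b e f) (.add b (.seq e (.loop b e f)) f)
  | RSP {b e f g} : GEq g (.add b (.seq e g) f) → GEq g (.loop b e f)


/-! ### Auxiliary lemmas for `dead_equals_zero` -/

section DeadLemmas

lemma dead_elim {h : SFA At Act X} {x : X} (hd : Dead h x) (α : At) :
    h x α = none ∨ ∃ p x', h x α = some (p, some x') ∧ Dead h x' := by
  obtain ⟨D, hx, hcl⟩ := hd
  rcases hcl x hx α with h0 | ⟨p, x', he, hx'⟩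
  · exact Or.inl h0
  · exact Or.inr ⟨p, x', he, ⟨D, hx', hcl⟩⟩

lemma dead_intro {h : SFA At Act X} {x : X}
    (H : ∀ α, h x α = none ∨ ∃ p x', h x α = some (p, some x') ∧ Dead h x') :
    Dead h x := by
  refine ⟨{y | Dead h y ∨ y = x}, Or.inr rfl, ?_⟩
  rintro y (hy | rfl) α
  · rcases dead_elim hy α with h0 | ⟨p, y', he, hy'⟩
    · exact Or.inl h0
    · exact Or.inr ⟨p, y', he, Or.inl hy'⟩
  · rcases H α with h0 | ⟨p, y', he, hy'⟩
    · exact Or.inl h0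
    · exact Or.inr ⟨p, y', he, Or.inl hy'⟩

lemma dead_closed {h : SFA At Act X} {x x' : X} {p : Act} {α : At} (hd : Dead h x)
    (hs : h x α = some (p, some x')) : Dead h x' := by
  rcases dead_elim hd α with h0 | ⟨q, y', he, hy'⟩
  · rw [hs] at h0; cases h0
  · rw [hs] at he
    obtain ⟨rfl, rfl⟩ : q = p ∧ y' = x' := by
      injection he with he'; injection he' with h1 h2
      exact ⟨h1.symm, (Option.some.inj h2).symm⟩
    exact hy'

lemma dead_seq_left {f : GExp At Act} (hnf : ¬ Dead gderiv f) :
    ∀ {x : GExp At Act}, Dead gderiv (.seq x f) → Dead gderiv x := by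
  intro x hx
  refine ⟨{y | Dead gderiv (GExp.seq y f)}, hx, ?_⟩
  intro y hy α
  rcases hgy : gderiv y α with _ | ⟨p, _ | y'⟩
  · exact Or.inl rfl
  · exfalso
    have : gderiv (GExp.seq y f) α = some (p, some f) := by simp [gderiv, hgy]
    exact hnf (dead_closed hy this)
  · have : gderiv (GExp.seq y f) α = some (p, some (GExp.seq y' f)) := by
      simp [gderiv, hgy]
    exact Or.inr ⟨p, y', rfl, dead_closed hy this⟩

/-- Elimination form for deadness of a guarded expression `e +_b 0`. -/
lemma dead_add_zero_elim {b : At → Bool} {e : GExp At Act}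
    (hd : Dead gderiv (.add b e .zero)) {α : At} (hb : b α = true) :
    gderiv e α = none ∨ ∃ p e', gderiv e α = some (p, some e') ∧ Dead gderiv e' := by
  have h := dead_elim hd α
  have hr : gderiv (GExp.add b e .zero) α = gderiv e α := by simp [gderiv, hb]
  rw [hr] at h; exact h

lemma dead_add_zero_intro {b : At → Bool} {e : GExp At Act}
    (H : ∀ α, b α = true →
      gderiv e α = none ∨ ∃ p e', gderiv e α = some (p, some e') ∧ Dead gderiv e') :
    Dead gderiv (.add b e .zero) := by
  apply dead_intro
  intro α
  by_cases hb : b α = true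
  · have hr : gderiv (GExp.add b e .zero) α = gderiv e α := by simp [gderiv, hb]
    rw [hr]; exact H α hb
  · have hb' : b α = false := by simpa using hb
    have hr : gderiv (GExp.add b e .zero) α = none := by simp [gderiv, hb']
    exact Or.inl hr

lemma dead_guard_true {e : GExp At Act} (hd : Dead gderiv e) :
    Dead gderiv (.add (fun _ => true) e .zero) :=
  dead_add_zero_intro fun α _ => dead_elim hd α

end DeadLemmas

section GEqLemmas

lemma geq_guard {b b' : At → Bool} (hb : ∀ α, b α = b' α) (e f : GExp At Act) :
    GEq (.add b e f) (.add b' e f) := by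
  have : b = b' := funext hb
  subst this; exact GEq.refl _

lemma geq_add_false {b : At → Bool} (hb : ∀ α, b α = false) (e f : GExp At Act) :
    GEq (.add b e f) f :=
  (GEq.G2 b e f).trans
    (((geq_guard (fun α => by simp [hb α]) f e).trans (GEq.G0 f e)))

/-- Skew-associativity shuffle: `(e +_c f) +_b g ≡ e +_{b∧c} (f +_b g)`. -/
lemma geq_shuffle (b c : At → Bool) (e f g : GExp At Act) :
    GEq (.add b (.add c e f) g)
      (.add (fun α => b α && c α) e (.add b f g)) := by
  refine (GEq.G2 b (.add c e f) g).trans ?_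
  refine (GEq.G3 (fun α => !b α) c g e f).trans ?_
  refine (geq_guard (b' := fun α => !b α || (b α && c α))
      (fun α => by cases hb : b α <;> cases hc : c α <;> simp [hb, hc]) _ _).trans ?_
  refine (GEq.G3 (fun α => !b α) (fun α => b α && c α) g e f).symm.trans ?_
  refine (GEq.G2 b (.add (fun α => b α && c α) e f) g).symm.trans ?_
  refine (geq_guard (b' := fun α => (b α && c α) || b α)
      (fun α => by cases hb : b α <;> cases hc : c α <;> simp [hb, hc]) _ _).trans ?_
  exact (GEq.G3 (fun α => b α && c α) b e f g).symm

/-- The inner guard can absorb the outer guard. -/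
lemma geq_inner (b c : At → Bool) (e f g : GExp At Act) :
    GEq (.add b e (.add c f g)) (.add b e (.add (fun α => b α || c α) f g)) := by
  refine (GEq.G3 b c e f g).trans ?_
  refine (geq_guard (b' := fun α => b α || (b α || c α))
      (fun α => by cases hb : b α <;> cases hc : c α <;> simp [hb, hc]) _ _).trans ?_
  exact (GEq.G3 b (fun α => b α || c α) e f g).symm

lemma geq_factor (b : At → Bool) (e g : GExp At Act) :
    GEq (.add b (.seq e g) .zero) (.seq (.add b e .zero) g) :=
  ((GEq.G8 b e .zero g).trans (GEq.congAdd b (GEq.refl _) (GEq.G6 g))).symm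

end GEqLemmas

/-- Main induction: every dead guarded expression `e +_b 0` is provably `0`. -/
theorem dead_add_zero_eq_zero :
    ∀ (e : GExp At Act) (b : At → Bool), Dead gderiv (.add b e .zero) →
      GEq (.add b e .zero) (.zero : GExp At Act) := by
  intro e
  induction e with
  | zero => intro b _; exact GEq.G1 b .zero
  | act p =>
    intro b hd
    apply geq_add_false
    intro α
    by_contra hb
    have hb' : b α = true := by simpa using hb
    rcases dead_add_zero_elim hd hb' with h0 | ⟨q, e', he, _⟩
    · simp [gderiv] at h0
    · simp [gderiv] at he
  | add c e f ihe ihf =>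
    intro b hd
    have hde : Dead gderiv (.add (fun α => b α && c α) e .zero) := by
      apply dead_add_zero_intro
      intro α hbc
      have hb : b α = true := (Bool.and_eq_true _ _).mp hbc |>.1
      have hc : c α = true := (Bool.and_eq_true _ _).mp hbc |>.2
      have h := dead_add_zero_elim hd hb
      have hr : gderiv (GExp.add c e f) α = gderiv e α := by simp [gderiv, hc]
      rw [hr] at h; exact h
    have hdf : Dead gderiv (.add (fun α => b α && !c α) f .zero) := by
      apply dead_add_zero_intro
      intro α hbc
      have hb : b α = true := (Bool.and_eq_true _ _).mp hbc |>.1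
      have hc : c α = false := by
        have := (Bool.and_eq_true _ _).mp hbc |>.2
        simpa using this
      have h := dead_add_zero_elim hd hb
      have hr : gderiv (GExp.add c e f) α = gderiv f α := by simp [gderiv, hc]
      rw [hr] at h; exact h
    refine (geq_shuffle b c e f .zero).trans ?_
    refine (GEq.congAdd _ (GEq.refl e)
      (geq_guard (b := b) (b' := fun α => (b α && c α) || (b α && !c α))
        (fun α => by cases hb : b α <;> cases hc : c α <;> simp [hb, hc]) f .zero)).trans ?_
    refine (geq_inner (fun α => b α && c α) (fun α => b α && !c α) e f .zero).symm.trans ?_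
    refine (GEq.congAdd _ (GEq.refl e) (ihf _ hdf)).trans ?_
    exact ihe _ hde
  | seq e f ihe ihf =>
    intro b hd
    by_cases hf : Dead gderiv f
    · have hf0 : GEq f (.zero : GExp At Act) :=
        (GEq.G0 f .zero).symm.trans (ihf _ (dead_guard_true hf))
      exact ((GEq.congAdd b (GEq.congSeq (GEq.refl e) hf0) (GEq.refl _)).trans
        ((GEq.congAdd b (GEq.dagger e) (GEq.refl _)).trans (GEq.G1 b .zero)))
    · have hde : Dead gderiv (.add b e .zero) := by
        apply dead_add_zero_intro
        intro α hb
        rcases hge : gderiv e α with _ | ⟨p, _ | e'⟩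
        · exact Or.inl rfl
        · exfalso
          have hstep : gderiv (GExp.add b (GExp.seq e f) GExp.zero) α
              = some (p, some f) := by simp [gderiv, hb, hge]
          exact hf (dead_closed hd hstep)
        · have hstep : gderiv (GExp.add b (GExp.seq e f) GExp.zero) α
              = some (p, some (GExp.seq e' f)) := by simp [gderiv, hb, hge]
          exact Or.inr ⟨p, e', rfl, dead_seq_left hf (dead_closed hd hstep)⟩
      exact (geq_factor b e f).trans ((GEq.congSeq (ihe b hde) (GEq.refl f)).trans
        (GEq.G6 f))
  | loop c w f ihw ihf =>
    intro b hd
    by_cases hL : Dead gderiv (.loop c w f)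
    · have hdf : Dead gderiv (.add (fun α => !c α) f .zero) := by
        apply dead_add_zero_intro
        intro α hc
        have hc' : c α = false := by simpa using hc
        have h := dead_elim hL α
        have hr : gderiv (GExp.loop c w f) α = gderiv f α := by simp [gderiv, hc']
        rw [hr] at h; exact h
      have hf0 : GEq (.add (fun α => !c α) f .zero) (.zero : GExp At Act) := ihf _ hdf
      have h0 : GEq (.zero : GExp At Act)
          (.add c (.seq w .zero) f) := by
        refine (GEq.symm ?_)
        refine (GEq.congAdd c (GEq.dagger w) (GEq.refl f)).trans ?_
        exact (GEq.G2 c .zero f).trans hf0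
      have hL0 : GEq (.zero : GExp At Act) (.loop c w f) := GEq.RSP h0
      exact (GEq.congAdd b hL0.symm (GEq.refl _)).trans (GEq.G1 b .zero)
    · have hdw : Dead gderiv (.add (fun α => b α && c α) w .zero) := by
        apply dead_add_zero_intro
        intro α hbc
        have hb : b α = true := (Bool.and_eq_true _ _).mp hbc |>.1
        have hc : c α = true := (Bool.and_eq_true _ _).mp hbc |>.2
        rcases hgw : gderiv w α with _ | ⟨p, _ | w'⟩
        · exact Or.inl rfl
        · exfalso
          have hstep : gderiv (GExp.add b (GExp.loop c w f) GExp.zero) α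
              = some (p, some (GExp.loop c w f)) := by simp [gderiv, hb, hc, hgw]
          exact hL (dead_closed hd hstep)
        · have hstep : gderiv (GExp.add b (GExp.loop c w f) GExp.zero) α
              = some (p, some (GExp.seq w' (GExp.loop c w f))) := by
            simp [gderiv, hb, hc, hgw]
          exact Or.inr ⟨p, w', rfl, dead_seq_left hL (dead_closed hd hstep)⟩
      have hdf : Dead gderiv (.add (fun α => b α && !c α) f .zero) := by
        apply dead_add_zero_intro
        intro α hbc
        have hb : b α = true := (Bool.and_eq_true _ _).mp hbc |>.1
        have hc : c α = false := by
          have := (Bool.and_eq_true _ _).mp hbc |>.2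
          simpa using this
        have h := dead_add_zero_elim hd hb
        have hr : gderiv (GExp.loop c w f) α = gderiv f α := by simp [gderiv, hc]
        rw [hr] at h; exact h
      have hw0 := ihw _ hdw
      have hf0 := ihf _ hdf
      refine (GEq.congAdd b (GEq.FP c w f) (GEq.refl _)).trans ?_
      refine (geq_shuffle b c (.seq w (.loop c w f)) f .zero).trans ?_
      refine (GEq.congAdd _ (GEq.refl _)
        (geq_guard (b := b) (b' := fun α => (b α && c α) || (b α && !c α))
          (fun α => by cases hb : b α <;> cases hc : c α <;> simp [hb, hc]) f .zero)).trans ?_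
      refine (geq_inner (fun α => b α && c α) (fun α => b α && !c α)
        (.seq w (.loop c w f)) f .zero).symm.trans ?_
      refine (GEq.congAdd _ (GEq.refl _) hf0).trans ?_
      refine (geq_factor (fun α => b α && c α) w (.loop c w f)).trans ?_
      exact (GEq.congSeq hw0 (GEq.refl _)).trans (GEq.G6 _)

/-- every dead skip-free GKAT expression is provably `0` from the full
axioms (including `x·0 = 0`). -/
theorem dead_equals_zero (e : GExp At Act) (h : Dead gderiv e) : GEq e .zero := by
  exact (GEq.G0 e .zero).symm.trans
    (dead_add_zero_eq_zero e (fun _ => true) (dead_guard_true h))
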